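/- arXiv:2004.09740 — 7 statements merged into one kernel-verified Lean document; each statement's English description precedes it below -/
import Mathlib

section
/- Let C > 0 and 0 < β₂ < λ² < 1. Define g_t = Cλ^{t-1} and v_t = (1-β₂)C²(λ^{2t} - β₂^t)/(λ² - β₂). Then for every t ≥ 1, g_t/√(v_t) ≥ √((λ² - β₂)/(λ²(1-β₂))). -/
theorem adam_update_ratio_lower_bound
    (C β₂ lam : ℝ) (hC : 0 < C) (hβ₂ : 0 < β₂) (hbl : β₂ < lam ^ 2)
    (hlam : lam ^ 2 < 1) (hlampos : 0 < lam) :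
    ∀ t : ℕ, 1 ≤ t →
      (C * lam ^ (t - 1)) /
        Real.sqrt ((1 - β₂) * C ^ 2 * (lam ^ (2 * t) - β₂ ^ t) / (lam ^ 2 - β₂))
      ≥ Real.sqrt ((lam ^ 2 - β₂) / (lam ^ 2 * (1 - β₂))) := by
  intro t ht
  obtain ⟨s, rfl⟩ : ∃ s, t = s + 1 := ⟨t - 1, (Nat.succ_pred_eq_of_pos ht).symm⟩
  have h1b : 0 < 1 - β₂ := by linarith
  have hl2 : 0 < lam ^ 2 - β₂ := by linarith
  have hβlt : β₂ ^ (s + 1) < lam ^ (2 * (s + 1)) := by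
    rw [pow_mul]
    exact pow_lt_pow_left₀ hbl hβ₂.le (Nat.succ_ne_zero s)
  have hg : 0 < C * lam ^ (s + 1 - 1) := by positivity
  have hv : 0 < (1 - β₂) * C ^ 2 * (lam ^ (2 * (s + 1)) - β₂ ^ (s + 1)) / (lam ^ 2 - β₂) := by
    apply div_pos _ hl2
    have : 0 < lam ^ (2 * (s + 1)) - β₂ ^ (s + 1) := by linarith
    positivity
  rw [ge_iff_le, le_div_iff₀ (Real.sqrt_pos.mpr hv), ← Real.sqrt_mul (by positivity)]
  have hkey : (lam ^ 2 - β₂) / (lam ^ 2 * (1 - β₂)) *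
      ((1 - β₂) * C ^ 2 * (lam ^ (2 * (s + 1)) - β₂ ^ (s + 1)) / (lam ^ 2 - β₂))
      ≤ (C * lam ^ (s + 1 - 1)) ^ 2 := by
    have h2s : lam ^ (2 * (s + 1)) = lam ^ (2 * s) * lam ^ 2 := by ring
    have hs1 : (s + 1 - 1 : ℕ) = s := rfl
    rw [hs1, h2s]
    have hβp : 0 < β₂ ^ (s + 1) := by positivity
    have hls : (lam ^ s) ^ 2 = lam ^ (2 * s) := by rw [← pow_mul, mul_comm]
    have hl2p : (0:ℝ) < lam ^ 2 := by positivity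
    rw [div_mul_div_comm, div_le_iff₀ (by positivity)]
    have : (lam ^ 2 - β₂) * ((1 - β₂) * C ^ 2 * (lam ^ (2 * s) * lam ^ 2 - β₂ ^ (s + 1)))
        ≤ (lam ^ 2 - β₂) * ((1 - β₂) * C ^ 2 * (lam ^ (2 * s) * lam ^ 2)) := by
      nlinarith [mul_pos (mul_pos (mul_pos hl2 h1b) (pow_pos hC 2)) hβp]
    calc (lam ^ 2 - β₂) * ((1 - β₂) * C ^ 2 * (lam ^ (2 * s) * lam ^ 2 - β₂ ^ (s + 1)))
        ≤ (lam ^ 2 - β₂) * ((1 - β₂) * C ^ 2 * (lam ^ (2 * s) * lam ^ 2)) := this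
      _ = (C * lam ^ s) ^ 2 * (lam ^ 2 * (1 - β₂) * (lam ^ 2 - β₂)) := by
          rw [mul_pow, hls]; ring
  calc Real.sqrt ((lam ^ 2 - β₂) / (lam ^ 2 * (1 - β₂)) *
        ((1 - β₂) * C ^ 2 * (lam ^ (2 * (s + 1)) - β₂ ^ (s + 1)) / (lam ^ 2 - β₂)))
      ≤ Real.sqrt ((C * lam ^ (s + 1 - 1)) ^ 2) := Real.sqrt_le_sqrt hkey
    _ = C * lam ^ (s + 1 - 1) := Real.sqrt_sq hg.le
end

section
/- Let C > 0, 0 < β₁ < λ < 1, 0 < β₂ < λ² < 1. With g_t = Cλ^{t-1}, m_t = Σ_{i=1}^t (1-β₁)β₁^{t-i} g_i and v_t = Σ_{i=1}^t (1-β₂)β₂^{t-i} g_i². Then for all t ≥ 1, m_t/√(v_t) ≥ ((1-β₁)√(λ² - β₂)/((λ-β₁)√(1-β₂))) · (1 - β₁/λ). -/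
lemma sum_geom_aux (x y : ℝ) (hxy : x ≠ y) (t : ℕ) :
    ∑ i ∈ Finset.Icc 1 t, y ^ (t - i) * x ^ (i - 1) = (x ^ t - y ^ t) / (x - y) := by
  have h : Finset.Icc 1 t = Finset.Ico 1 (t + 1) := by
    ext i; simp [Nat.lt_succ_iff]
  rw [h, Finset.sum_Ico_eq_sum_range]
  simp only [Nat.add_sub_cancel, Nat.add_sub_cancel_left]
  rw [eq_div_iff (sub_ne_zero.mpr hxy), ← geom_sum₂_mul x y t]
  congr 1
  apply Finset.sum_congr rfl
  intro i hi
  rw [mul_comm]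
  congr 2
  omega

lemma pow_le_div_mul_pow_aux (β lam : ℝ) (hβ : 0 < β) (h : β < lam) :
    ∀ t : ℕ, 1 ≤ t → β ^ t ≤ β / lam * lam ^ t := by
  intro t ht
  have hlam0 : 0 < lam := hβ.trans h
  obtain ⟨s, rfl⟩ : ∃ s, t = s + 1 := ⟨t - 1, by omega⟩
  rw [pow_succ', pow_succ']
  have h1 : β ^ s ≤ lam ^ s := pow_le_pow_left₀ hβ.le h.le s
  have heq : β / lam * (lam * lam ^ s) = β * lam ^ s := by
    field_simp
  rw [heq]
  nlinarith

set_option maxHeartbeats 800000 in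
theorem adam_momentum_update_ratio_lower_bound
    (C β₁ β₂ lam : ℝ) (hC : 0 < C)
    (hβ₁ : 0 < β₁) (hb1l : β₁ < lam) (hlam : lam < 1)
    (hβ₂ : 0 < β₂) (hb2l : β₂ < lam ^ 2) :
    ∀ t : ℕ, 1 ≤ t →
      (∑ i ∈ Finset.Icc 1 t, (1 - β₁) * β₁ ^ (t - i) * (C * lam ^ (i - 1))) /
        Real.sqrt (∑ i ∈ Finset.Icc 1 t, (1 - β₂) * β₂ ^ (t - i) * (C * lam ^ (i - 1)) ^ 2)
      ≥ ((1 - β₁) * Real.sqrt (lam ^ 2 - β₂) / ((lam - β₁) * Real.sqrt (1 - β₂)))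
          * (1 - β₁ / lam) := by
  intro t ht
  have hlam0 : 0 < lam := hβ₁.trans hb1l
  have h1b1 : 0 < 1 - β₁ := by nlinarith
  have hlb1 : 0 < lam - β₁ := by linarith
  have h1b2 : 0 < 1 - β₂ := by nlinarith
  have hl2b2 : 0 < lam ^ 2 - β₂ := by linarith
  have ht0 : t ≠ 0 := by omega
  have hm : (∑ i ∈ Finset.Icc 1 t, (1 - β₁) * β₁ ^ (t - i) * (C * lam ^ (i - 1)))
      = (1 - β₁) * C * ((lam ^ t - β₁ ^ t) / (lam - β₁)) := by
    rw [← sum_geom_aux lam β₁ (by linarith) t, Finset.mul_sum]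
    apply Finset.sum_congr rfl; intro i _; ring
  have hv : (∑ i ∈ Finset.Icc 1 t, (1 - β₂) * β₂ ^ (t - i) * (C * lam ^ (i - 1)) ^ 2)
      = (1 - β₂) * C ^ 2 * (((lam ^ 2) ^ t - β₂ ^ t) / (lam ^ 2 - β₂)) := by
    rw [← sum_geom_aux (lam ^ 2) β₂ (by linarith) t, Finset.mul_sum]
    apply Finset.sum_congr rfl; intro i _
    rw [← pow_mul, mul_comm 2 (i - 1), pow_mul]
    ring
  set V := (∑ i ∈ Finset.Icc 1 t, (1 - β₂) * β₂ ^ (t - i) * (C * lam ^ (i - 1)) ^ 2) with hVdef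
  have hblt : β₂ ^ t < (lam ^ 2) ^ t := pow_lt_pow_left₀ hb2l hβ₂.le ht0
  have hVpos : 0 < V := by
    rw [hv]
    have : 0 < (lam ^ 2) ^ t - β₂ ^ t := by linarith
    positivity
  clear_value V
  have hsVpos : 0 < Real.sqrt V := Real.sqrt_pos.mpr hVpos
  set U := C * lam ^ t * (Real.sqrt (1 - β₂) / Real.sqrt (lam ^ 2 - β₂)) with hUdef
  have hs1 : 0 < Real.sqrt (1 - β₂) := Real.sqrt_pos.mpr h1b2
  have hs2 : 0 < Real.sqrt (lam ^ 2 - β₂) := Real.sqrt_pos.mpr hl2b2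
  have hUpos : 0 < U := by positivity
  have hU2 : U ^ 2 = (1 - β₂) * C ^ 2 * ((lam ^ 2) ^ t / (lam ^ 2 - β₂)) := by
    rw [hUdef, mul_pow, mul_pow, div_pow, Real.sq_sqrt h1b2.le, Real.sq_sqrt hl2b2.le,
      ← pow_mul, mul_comm t 2, pow_mul]
    ring
  have hVU : V ≤ U ^ 2 := by
    rw [hU2, hv]
    have hb2t : 0 < β₂ ^ t := pow_pos hβ₂ t
    gcongr
    linarith
  have hsVU : Real.sqrt V ≤ U := by
    calc Real.sqrt V ≤ Real.sqrt (U ^ 2) := Real.sqrt_le_sqrt hVU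
    _ = U := Real.sqrt_sq hUpos.le
  -- abbreviate the constant K
  set K := ((1 - β₁) * Real.sqrt (lam ^ 2 - β₂) / ((lam - β₁) * Real.sqrt (1 - β₂)))
      * (1 - β₁ / lam) with hKdef
  have hKpos : 0 ≤ K := by
    have : 0 < 1 - β₁ / lam := by
      rw [sub_pos, div_lt_one hlam0]; exact hb1l
    positivity
  have hKU : K * U = (1 - β₁) * (1 - β₁ / lam) * C * lam ^ t / (lam - β₁) := by
    rw [hKdef, hUdef]
    field_simp
  have hmge : (1 - β₁) * (1 - β₁ / lam) * C * lam ^ t / (lam - β₁)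
      ≤ (∑ i ∈ Finset.Icc 1 t, (1 - β₁) * β₁ ^ (t - i) * (C * lam ^ (i - 1))) := by
    rw [hm]
    have hpow : β₁ ^ t ≤ β₁ / lam * lam ^ t :=
      pow_le_div_mul_pow_aux β₁ lam hβ₁ hb1l t ht
    have hcore : (1 - β₁ / lam) * lam ^ t ≤ lam ^ t - β₁ ^ t := by nlinarith
    have hrw : (1 - β₁) * C * ((lam ^ t - β₁ ^ t) / (lam - β₁))
        = (1 - β₁) * C * (lam ^ t - β₁ ^ t) / (lam - β₁) := by ring
    rw [hrw, div_le_div_iff₀ hlb1 hlb1]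
    nlinarith [mul_le_mul_of_nonneg_left hcore
      (le_of_lt (by positivity : (0:ℝ) < (1 - β₁) * C * (lam - β₁)))]
  rw [ge_iff_le, le_div_iff₀ hsVpos]
  calc K * Real.sqrt V ≤ K * U := mul_le_mul_of_nonneg_left hsVU hKpos
  _ = (1 - β₁) * (1 - β₁ / lam) * C * lam ^ t / (lam - β₁) := hKU
  _ ≤ _ := hmge
end

section
/- Let C > 0, β₂ > 0, λ ∈ (0,1), g_t = Cλ^{t-1}, and v̂_t = (β₂C²/((1+β₂) - λ²)) · ((1+β₂)^t - λ^{2t})/((1+β₂)^t - 1). Then for all t ≥ 1, g_t/√(v̂_t) ≤ √((1+β₂-λ²)/β₂) · λ^{t-1}. -/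
theorem adax_update_ratio_geometric_decay
    (C β₂ lam : ℝ) (hC : 0 < C) (hβ₂ : 0 < β₂) (hlam0 : 0 < lam) (hlam1 : lam < 1) :
    ∀ t : ℕ, 1 ≤ t →
      (C * lam ^ (t - 1)) /
        Real.sqrt ((β₂ * C ^ 2 / ((1 + β₂) - lam ^ 2))
          * (((1 + β₂) ^ t - lam ^ (2 * t)) / ((1 + β₂) ^ t - 1)))
      ≤ Real.sqrt ((1 + β₂ - lam ^ 2) / β₂) * lam ^ (t - 1) := by
  intro t ht
  have hD : 0 < (1 + β₂) - lam ^ 2 := by nlinarith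
  have hX : (1:ℝ) < (1 + β₂) ^ t := by
    apply one_lt_pow₀ (by linarith) (by omega)
  have hden : 0 < (1 + β₂) ^ t - 1 := by linarith
  have hl1 : lam ^ (2 * t) ≤ 1 := pow_le_one₀ hlam0.le hlam1.le
  have hA : (1:ℝ) ≤ ((1 + β₂) ^ t - lam ^ (2 * t)) / ((1 + β₂) ^ t - 1) := by
    rw [le_div_iff₀ hden]; linarith
  have hK : 0 < β₂ * C ^ 2 / ((1 + β₂) - lam ^ 2) := by positivity
  have hv : β₂ * C ^ 2 / ((1 + β₂) - lam ^ 2) ≤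
      (β₂ * C ^ 2 / ((1 + β₂) - lam ^ 2)) *
        (((1 + β₂) ^ t - lam ^ (2 * t)) / ((1 + β₂) ^ t - 1)) := by
    nlinarith
  have h1 : (C * lam ^ (t - 1)) /
        Real.sqrt ((β₂ * C ^ 2 / ((1 + β₂) - lam ^ 2))
          * (((1 + β₂) ^ t - lam ^ (2 * t)) / ((1 + β₂) ^ t - 1)))
      ≤ (C * lam ^ (t - 1)) / Real.sqrt (β₂ * C ^ 2 / ((1 + β₂) - lam ^ 2)) := by
    apply div_le_div_of_nonneg_left (by positivity) (Real.sqrt_pos.mpr hK)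
    exact Real.sqrt_le_sqrt hv
  refine h1.trans (le_of_eq ?_)
  rw [show β₂ * C ^ 2 / ((1 + β₂) - lam ^ 2) = C ^ 2 * (β₂ / ((1 + β₂) - lam ^ 2)) by ring,
    Real.sqrt_mul (by positivity), Real.sqrt_sq hC.le]
  have hs : Real.sqrt (((1 + β₂) - lam ^ 2) / β₂) *
      Real.sqrt (β₂ / ((1 + β₂) - lam ^ 2)) = 1 := by
    rw [← Real.sqrt_mul (by positivity),
      show ((1 + β₂) - lam ^ 2) / β₂ * (β₂ / ((1 + β₂) - lam ^ 2)) = 1 by field_simp]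
    exact Real.sqrt_one
  have hb : (0:ℝ) < Real.sqrt (β₂ / ((1 + β₂) - lam ^ 2)) := Real.sqrt_pos.mpr (by positivity)
  rw [div_eq_iff (by positivity)]
  linear_combination (-(C * lam ^ (t - 1))) * hs
end

section
/- Let β₂ ∈ (0,1), α_t = α/√t with α > 0, and g_1, …, g_T ∈ ℝ. Define v_t = (1+β₂)v_{t-1} + β₂ g_t² with v_0 = 0 and v̂_t = v_t/((1+β₂)^t - 1). Then for every t ≥ 2, v̂_t/α_t² ≥ v̂_{t-1}/α_{t-1}². -/
theorem adax_scaled_second_moment_monotone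
    (β₂ α : ℝ) (hβ₂ : 0 < β₂) (hβ₂1 : β₂ < 1) (hα : 0 < α)
    (g : ℕ → ℝ) (v : ℕ → ℝ) (hv0 : v 0 = 0)
    (hrec : ∀ t : ℕ, 1 ≤ t → v t = (1 + β₂) * v (t - 1) + β₂ * (g t) ^ 2) :
    ∀ t : ℕ, 2 ≤ t →
      (v t / ((1 + β₂) ^ t - 1)) / (α / Real.sqrt t) ^ 2
        ≥ (v (t - 1) / ((1 + β₂) ^ (t - 1) - 1)) / (α / Real.sqrt (t - 1 : ℕ)) ^ 2 := by
  have hvnn : ∀ n, 0 ≤ v n := by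
    intro n
    induction n with
    | zero => simp [hv0]
    | succ k ih =>
      have h := hrec (k + 1) (Nat.le_add_left 1 k)
      simp only [Nat.add_sub_cancel] at h
      rw [h]
      have : 0 ≤ (1 + β₂) * v k := mul_nonneg (by linarith) ih
      nlinarith [sq_nonneg (g (k + 1))]
  intro t ht
  have h1t : 1 ≤ t := le_trans (by norm_num) ht
  obtain ⟨s, rfl⟩ : ∃ s, t = s + 1 := ⟨t - 1, (Nat.succ_pred_eq_of_pos (by omega)).symm⟩
  have hs1 : 1 ≤ s := by omega
  simp only [Nat.add_sub_cancel]
  have hx : (1 : ℝ) < 1 + β₂ := by linarith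
  have hDs : (0 : ℝ) < (1 + β₂) ^ s - 1 :=
    sub_pos.mpr (one_lt_pow₀ hx (by omega))
  have hDt : (0 : ℝ) < (1 + β₂) ^ (s + 1) - 1 :=
    sub_pos.mpr (one_lt_pow₀ hx (by omega))
  have hsR : (0 : ℝ) < (s : ℝ) := by exact_mod_cast hs1
  have htR : (0 : ℝ) < ((s + 1 : ℕ) : ℝ) := by positivity
  -- rewrite the squared step sizes
  have hsq : ∀ n : ℕ, (α / Real.sqrt n) ^ 2 = α ^ 2 / (n : ℝ) := by
    intro n
    rw [div_pow, Real.sq_sqrt (Nat.cast_nonneg n)]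
  rw [ge_iff_le, hsq, hsq]
  rw [div_div_eq_mul_div, div_div_eq_mul_div, div_mul_eq_mul_div, div_mul_eq_mul_div]
  apply div_le_div_of_nonneg_right ?_ (by positivity)
  · rw [div_le_div_iff₀ hDs hDt]
    push_cast
    have hrecs := hrec (s + 1) (Nat.le_add_left 1 s)
    simp only [Nat.add_sub_cancel] at hrecs
    -- Bernoulli: (1+β₂)^(s+1) ≥ 1 + (s+1)β₂
    have hbern : 1 + ((s : ℝ) + 1) * β₂ ≤ (1 + β₂) ^ (s + 1) := by
      have := one_add_mul_le_pow (a := β₂) (by linarith) (s + 1)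
      push_cast at this
      linarith
    have hvt : (1 + β₂) * v s ≤ v (s + 1) := by
      nlinarith [sq_nonneg (g (s + 1))]
    have key : (s : ℝ) * ((1 + β₂) ^ (s + 1) - 1)
        ≤ ((s : ℝ) + 1) * ((1 + β₂) * ((1 + β₂) ^ s - 1)) := by
      have hpow : (1 + β₂) * (1 + β₂) ^ s = (1 + β₂) ^ (s + 1) := by ring
      nlinarith [hbern]
    nlinarith [mul_nonneg (hvnn s) (mul_nonneg hsR.le hDt.le),
      mul_le_mul_of_nonneg_left key (hvnn s),
      mul_le_mul_of_nonneg_right hvt (mul_nonneg htR.le hDs.le)]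
end

section
/- For all β₂ ∈ (0,1) and integers t ≥ 2, (1 + β₂/t)^{t-1} - (1 + β₂/t)^{-1} ≤ (1 + β₂/(t-1))^{t-1} - 1. -/
lemma pow_aux (a b : ℝ) (ha : 1 ≤ a) (hab : a ≤ b) :
    ∀ n : ℕ, a ^ n + n * (b - a) ≤ b ^ n := by
  intro n
  induction n with
  | zero => simp
  | succ n ih =>
    have h1 : (1:ℝ) ≤ a ^ n := one_le_pow₀ ha
    have h2 : (1:ℝ) ≤ b := le_trans ha hab
    have h3 : b * (a ^ n + n * (b - a)) ≤ b * b ^ n :=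
      mul_le_mul_of_nonneg_left ih (by linarith)
    push_cast
    rw [pow_succ, pow_succ]
    nlinarith [mul_nonneg (sub_nonneg.mpr hab) (sub_nonneg.mpr h1),
      mul_nonneg (mul_nonneg (Nat.cast_nonneg n : (0:ℝ) ≤ n) (sub_nonneg.mpr hab)) (sub_nonneg.mpr h2)]

theorem bias_correction_denominator_inequality
    (β₂ : ℝ) (hβ₂ : 0 < β₂) (hβ₂1 : β₂ < 1) :
    ∀ t : ℕ, 2 ≤ t →
      (1 + β₂ / t) ^ (t - 1) - (1 + β₂ / t)⁻¹
        ≤ (1 + β₂ / ((t : ℝ) - 1)) ^ (t - 1) - 1 := by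
  intro t ht
  have ht2 : (2:ℝ) ≤ (t:ℝ) := by exact_mod_cast ht
  have htpos : (0:ℝ) < t := by linarith
  have ht1pos : (0:ℝ) < (t:ℝ) - 1 := by linarith
  set a : ℝ := 1 + β₂ / t with ha_def
  set b : ℝ := 1 + β₂ / ((t:ℝ) - 1) with hb_def
  have hd : (0:ℝ) < β₂ / t := div_pos hβ₂ htpos
  have ha1 : (1:ℝ) ≤ a := by rw [ha_def]; linarith
  have hab : a ≤ b := by
    rw [ha_def, hb_def]
    gcongr
    · linarith
  have key := pow_aux a b ha1 hab (t - 1)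
  have hcast : ((t - 1 : ℕ) : ℝ) = (t:ℝ) - 1 := by
    have : 1 ≤ t := by omega
    push_cast [this]; ring
  -- (t-1)*(b-a) = β₂/t
  have hba : ((t - 1 : ℕ) : ℝ) * (b - a) = β₂ / t := by
    rw [hcast, ha_def, hb_def]
    field_simp
    ring
  rw [hba] at key
  -- 1 - a⁻¹ ≤ β₂ / t
  have hapos : (0:ℝ) < a := by linarith
  have hinv : 1 - a⁻¹ ≤ β₂ / t := by
    have h : a⁻¹ * a = 1 := inv_mul_cancel₀ (ne_of_gt hapos)
    have hinvle : a⁻¹ ≤ 1 := inv_le_one_of_one_le₀ ha1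
    nlinarith
  linarith
end

section
/- Let β₂ ∈ (0,1) and G > 0. If |g_j| ≤ G for all j, and v̂_t = (1/((1+β₂/t)^t - 1)) · Σ_{j=1}^t (β₂/j) · Π_{k=1}^{t-j}(1 + β₂/(t-k+1)) · g_j², then v̂_t ≤ t·G² for all t ≥ 1. -/
open Finset

private lemma adax_prod_teles (β₂ : ℝ) (hβ₂ : 0 ≤ β₂) (hβ₂1 : β₂ ≤ 1) (t : ℕ) :
    ∀ n : ℕ, n ≤ t →
      ∏ k ∈ Finset.Icc 1 n, (1 + β₂ / ((t : ℝ) - k + 1)) ≤ ((t:ℝ)+1)/((t:ℝ)-n+1) := by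
  intro n
  induction n with
  | zero =>
    intro _
    simp only [Nat.cast_zero, sub_zero, Finset.Icc_self]
    rw [show Finset.Icc 1 0 = (∅ : Finset ℕ) by rfl, Finset.prod_empty,
      div_self (by positivity : ((t:ℝ)+1) ≠ 0)]
  | succ n ih =>
    intro hn
    have hn' : n ≤ t := Nat.le_of_succ_le hn
    have htn : (1:ℝ) ≤ (t:ℝ) - n := by
      have : (n:ℝ) + 1 ≤ t := by exact_mod_cast hn
      linarith
    have hpos : (0:ℝ) < (t:ℝ) - n := by linarith
    have hpos1 : (0:ℝ) < (t:ℝ) - n + 1 := by linarith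
    rw [Finset.prod_Icc_succ_top (Nat.one_le_iff_ne_zero.mpr (Nat.succ_ne_zero n))]
    have e : (t:ℝ) - (↑(n+1):ℝ) + 1 = (t:ℝ) - n := by push_cast; ring
    rw [e]
    have hprod_nonneg : (0:ℝ) ≤ ∏ k ∈ Finset.Icc 1 n, (1 + β₂ / ((t : ℝ) - k + 1)) := by
      apply Finset.prod_nonneg
      intro k hk
      simp only [Finset.mem_Icc] at hk
      have hk2 : (k:ℝ) ≤ t := by
        have : k ≤ t := le_trans hk.2 hn'
        exact_mod_cast this
      have hk3 : (0:ℝ) < (t:ℝ) - k + 1 := by linarith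
      have := div_nonneg hβ₂ hk3.le
      linarith
    have hfac : 1 + β₂ / ((t:ℝ) - n) ≤ ((t:ℝ)-n+1)/((t:ℝ)-n) := by
      have h2 : ((t:ℝ)-n+1)/((t:ℝ)-n) = 1 + 1/((t:ℝ)-n) := by
        field_simp
      rw [h2]
      have : β₂ / ((t:ℝ) - n) ≤ 1 / ((t:ℝ)-n) := by gcongr
      linarith
    have hfac_nonneg : (0:ℝ) ≤ 1 + β₂ / ((t:ℝ) - n) := by
      have := div_nonneg hβ₂ hpos.le
      linarith
    have hmul : (∏ k ∈ Finset.Icc 1 n, (1 + β₂ / ((t : ℝ) - k + 1))) * (1 + β₂ / ((t:ℝ) - n))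
        ≤ (((t:ℝ)+1)/((t:ℝ)-n+1)) * (((t:ℝ)-n+1)/((t:ℝ)-n)) := by
      apply mul_le_mul (ih hn') hfac hfac_nonneg (by positivity)
    have heq : (((t:ℝ)+1)/((t:ℝ)-n+1)) * (((t:ℝ)-n+1)/((t:ℝ)-n)) = ((t:ℝ)+1)/((t:ℝ)-n) := by
      rw [div_mul_div_comm, mul_comm ((t:ℝ)-n+1) ((t:ℝ)-n), mul_div_mul_right _ _ hpos1.ne']
    rw [heq] at hmul
    exact hmul

private lemma adax_sum_teles : ∀ t : ℕ,
    ∑ j ∈ Finset.Icc 1 t, (1:ℝ)/((j:ℝ)*((j:ℝ)+1)) = (t:ℝ)/((t:ℝ)+1) := by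
  intro t
  induction t with
  | zero => simp
  | succ t ih =>
    rw [Finset.sum_Icc_succ_top (Nat.one_le_iff_ne_zero.mpr (Nat.succ_ne_zero t)), ih]
    have h1 : (0:ℝ) < (t:ℝ)+1 := by positivity
    have h2 : (0:ℝ) < (t:ℝ)+2 := by positivity
    push_cast
    field_simp
    ring

theorem adax_second_moment_bounded_time_decaying
    (β₂ G : ℝ) (hβ₂ : 0 < β₂) (hβ₂1 : β₂ < 1) (hG : 0 < G)
    (g : ℕ → ℝ) (hg : ∀ j, |g j| ≤ G) :
    ∀ t : ℕ, 1 ≤ t →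
      (1 / ((1 + β₂ / t) ^ t - 1)) *
          ∑ j ∈ Finset.Icc 1 t,
            (β₂ / j) * (∏ k ∈ Finset.Icc 1 (t - j), (1 + β₂ / ((t : ℝ) - k + 1)))
              * (g j) ^ 2
        ≤ (t : ℝ) * G ^ 2 := by
  intro t ht
  have htR : (1:ℝ) ≤ (t:ℝ) := by exact_mod_cast ht
  have htpos : (0:ℝ) < (t:ℝ) := lt_of_lt_of_le one_pos htR
  have hD : β₂ ≤ (1 + β₂ / t) ^ t - 1 := by
    have hx : (-2:ℝ) ≤ β₂ / t := by
      have : (0:ℝ) ≤ β₂ / t := by positivity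
      linarith
    have hb := one_add_mul_le_pow hx t
    have heq : (t:ℝ) * (β₂ / t) = β₂ := by field_simp
    rw [heq] at hb
    linarith
  have hDpos : (0:ℝ) < (1 + β₂ / t) ^ t - 1 := lt_of_lt_of_le hβ₂ hD
  set S := ∑ j ∈ Finset.Icc 1 t,
      (β₂ / j) * (∏ k ∈ Finset.Icc 1 (t - j), (1 + β₂ / ((t : ℝ) - k + 1))) * (g j) ^ 2 with hS
  have hprodnn : ∀ j : ℕ, (0:ℝ) ≤ ∏ k ∈ Finset.Icc 1 (t - j), (1 + β₂ / ((t : ℝ) - k + 1)) := by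
    intro j
    apply Finset.prod_nonneg
    intro k hk
    simp only [Finset.mem_Icc] at hk
    have : k ≤ t := le_trans hk.2 (Nat.sub_le t j)
    have hkR : (k:ℝ) ≤ (t:ℝ) := by exact_mod_cast this
    have hk3 : (0:ℝ) < (t:ℝ) - k + 1 := by linarith
    have := div_nonneg hβ₂.le hk3.le
    linarith
  have hterm_nonneg : ∀ j ∈ Finset.Icc 1 t,
      (0:ℝ) ≤ (β₂ / j) * (∏ k ∈ Finset.Icc 1 (t - j), (1 + β₂ / ((t : ℝ) - k + 1))) * (g j) ^ 2 := by
    intro j _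
    have h1 : (0:ℝ) ≤ β₂ / j := by positivity
    exact mul_nonneg (mul_nonneg h1 (hprodnn j)) (sq_nonneg _)
  have hSnonneg : 0 ≤ S := Finset.sum_nonneg hterm_nonneg
  have hSbound : S ≤ β₂ * (t:ℝ) * G ^ 2 := by
    have hstep : S ≤ ∑ j ∈ Finset.Icc 1 t, β₂ * ((t:ℝ)+1) * G ^ 2 * ((1:ℝ)/((j:ℝ)*((j:ℝ)+1))) := by
      apply Finset.sum_le_sum
      intro j hj
      simp only [Finset.mem_Icc] at hj
      have hj1 : (1:ℝ) ≤ (j:ℝ) := by exact_mod_cast hj.1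
      have hjt : (j:ℝ) ≤ (t:ℝ) := by exact_mod_cast hj.2
      have hjpos : (0:ℝ) < (j:ℝ) := by linarith
      have hcast : ((t - j : ℕ) : ℝ) = (t:ℝ) - (j:ℝ) := by
        rw [Nat.cast_sub hj.2]
      have hprod : ∏ k ∈ Finset.Icc 1 (t - j), (1 + β₂ / ((t : ℝ) - k + 1))
          ≤ ((t:ℝ)+1)/((j:ℝ)+1) := by
        have := adax_prod_teles β₂ hβ₂.le hβ₂1.le t (t - j) (Nat.sub_le t j)
        rwa [hcast, show (t:ℝ) - ((t:ℝ) - (j:ℝ)) + 1 = (j:ℝ) + 1 by ring] at this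
      have hg2 : (g j) ^ 2 ≤ G ^ 2 := by
        have habs : |g j| ^ 2 ≤ G ^ 2 := pow_le_pow_left₀ (abs_nonneg _) (hg j) 2
        rwa [sq_abs] at habs
      calc (β₂ / j) * (∏ k ∈ Finset.Icc 1 (t - j), (1 + β₂ / ((t : ℝ) - k + 1))) * (g j) ^ 2
          ≤ (β₂ / j) * (((t:ℝ)+1)/((j:ℝ)+1)) * G ^ 2 := by
            apply mul_le_mul _ hg2 (sq_nonneg _) (by positivity)
            exact mul_le_mul_of_nonneg_left hprod (by positivity)
        _ = β₂ * ((t:ℝ)+1) * G ^ 2 * ((1:ℝ)/((j:ℝ)*((j:ℝ)+1))) := by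
            field_simp
    rw [← Finset.mul_sum, adax_sum_teles t] at hstep
    calc S ≤ β₂ * ((t:ℝ)+1) * G ^ 2 * ((t:ℝ)/((t:ℝ)+1)) := hstep
      _ = β₂ * (t:ℝ) * G ^ 2 := by
        field_simp
  calc (1 / ((1 + β₂ / t) ^ t - 1)) * S
      ≤ (1 / β₂) * (β₂ * (t:ℝ) * G ^ 2) := by
        apply mul_le_mul _ hSbound hSnonneg (by positivity)
        exact one_div_le_one_div_of_le hβ₂ hD
    _ = (t:ℝ) * G ^ 2 := by
        field_simp
end

section
/- Let β₁ ∈ [0,1) and g_1, …, g_t ∈ ℝ, and define m_t = Σ_{j=1}^t (1-β_{1j}) Π_{k=1}^{t-j} β_{1(t-k+1)} g_j with all β_{1j} ≤ β₁. Then m_t² ≤ (Σ_{j=1}^t β₁^{t-j}) · (Σ_{j=1}^t β₁^{t-j} g_j²) ≤ (1/(1-β₁)) Σ_{j=1}^t β₁^{t-j} g_j². -/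
theorem first_moment_cauchy_schwarz_bound
    (β₁ : ℝ) (hβ₁0 : 0 ≤ β₁) (hβ₁1 : β₁ < 1)
    (t : ℕ) (ht : 1 ≤ t) (g : ℕ → ℝ) (β₁seq : ℕ → ℝ)
    (hseq : ∀ j, 0 ≤ β₁seq j ∧ β₁seq j ≤ β₁) :
    (∑ j ∈ Finset.Icc 1 t,
        (1 - β₁seq j) * (∏ k ∈ Finset.Icc 1 (t - j), β₁seq (t - k + 1)) * g j) ^ 2
      ≤ (∑ j ∈ Finset.Icc 1 t, β₁ ^ (t - j)) *
          (∑ j ∈ Finset.Icc 1 t, β₁ ^ (t - j) * (g j) ^ 2) ∧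
    (∑ j ∈ Finset.Icc 1 t, β₁ ^ (t - j)) *
        (∑ j ∈ Finset.Icc 1 t, β₁ ^ (t - j) * (g j) ^ 2)
      ≤ (1 / (1 - β₁)) * ∑ j ∈ Finset.Icc 1 t, β₁ ^ (t - j) * (g j) ^ 2 := by
  set c : ℕ → ℝ := fun j => (1 - β₁seq j) * (∏ k ∈ Finset.Icc 1 (t - j), β₁seq (t - k + 1))
    with hc
  have hc0 : ∀ j, 0 ≤ c j := by
    intro j
    apply mul_nonneg
    · linarith [(hseq j).1, (hseq j).2]
    · exact Finset.prod_nonneg fun k _ => (hseq _).1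
  have hcle : ∀ j, c j ≤ β₁ ^ (t - j) := by
    intro j
    have h1 : (∏ k ∈ Finset.Icc 1 (t - j), β₁seq (t - k + 1)) ≤ β₁ ^ (t - j) := by
      calc (∏ k ∈ Finset.Icc 1 (t - j), β₁seq (t - k + 1))
          ≤ ∏ k ∈ Finset.Icc 1 (t - j), β₁ :=
            Finset.prod_le_prod (fun k _ => (hseq _).1) (fun k _ => (hseq _).2)
        _ = β₁ ^ (t - j) := by rw [Finset.prod_const, Nat.card_Icc]; norm_num
    calc c j ≤ 1 * (∏ k ∈ Finset.Icc 1 (t - j), β₁seq (t - k + 1)) := by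
          apply mul_le_mul_of_nonneg_right _ (Finset.prod_nonneg fun k _ => (hseq _).1)
          linarith [(hseq j).1]
      _ = _ := one_mul _
      _ ≤ β₁ ^ (t - j) := h1
  have hsum1 : (∑ j ∈ Finset.Icc 1 t, c j) ≤ ∑ j ∈ Finset.Icc 1 t, β₁ ^ (t - j) :=
    Finset.sum_le_sum fun j _ => hcle j
  have hsum2 : (∑ j ∈ Finset.Icc 1 t, c j * (g j) ^ 2)
      ≤ ∑ j ∈ Finset.Icc 1 t, β₁ ^ (t - j) * (g j) ^ 2 :=
    Finset.sum_le_sum fun j _ => mul_le_mul_of_nonneg_right (hcle j) (sq_nonneg _)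
  have hCS : (∑ j ∈ Finset.Icc 1 t, c j * g j) ^ 2
      ≤ (∑ j ∈ Finset.Icc 1 t, c j) * (∑ j ∈ Finset.Icc 1 t, c j * (g j) ^ 2) := by
    have := Finset.sum_mul_sq_le_sq_mul_sq (Finset.Icc 1 t)
      (fun j => Real.sqrt (c j)) (fun j => Real.sqrt (c j) * g j)
    simp only [mul_pow, Real.sq_sqrt (hc0 _)] at this
    calc (∑ j ∈ Finset.Icc 1 t, c j * g j) ^ 2
        = (∑ j ∈ Finset.Icc 1 t, Real.sqrt (c j) * (Real.sqrt (c j) * g j)) ^ 2 := by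
          congr 1; apply Finset.sum_congr rfl; intro j _
          rw [← mul_assoc, Real.mul_self_sqrt (hc0 j)]
      _ ≤ _ := this
  have hnn2 : 0 ≤ ∑ j ∈ Finset.Icc 1 t, β₁ ^ (t - j) * (g j) ^ 2 :=
    Finset.sum_nonneg fun j _ => mul_nonneg (pow_nonneg hβ₁0 _) (sq_nonneg _)
  have hcnn : 0 ≤ ∑ j ∈ Finset.Icc 1 t, c j := Finset.sum_nonneg fun j _ => hc0 j
  have hcgnn : 0 ≤ ∑ j ∈ Finset.Icc 1 t, c j * (g j) ^ 2 :=
    Finset.sum_nonneg fun j _ => mul_nonneg (hc0 j) (sq_nonneg _)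
  constructor
  · calc (∑ j ∈ Finset.Icc 1 t, c j * g j) ^ 2
        ≤ (∑ j ∈ Finset.Icc 1 t, c j) * (∑ j ∈ Finset.Icc 1 t, c j * (g j) ^ 2) := hCS
      _ ≤ _ := mul_le_mul hsum1 hsum2 hcgnn (hcnn.trans hsum1)
  · have hgeom : (∑ j ∈ Finset.Icc 1 t, β₁ ^ (t - j)) ≤ 1 / (1 - β₁) := by
      have heq : (∑ j ∈ Finset.Icc 1 t, β₁ ^ (t - j)) = ∑ i ∈ Finset.range t, β₁ ^ i := by
        apply Finset.sum_bij' (fun j _ => t - j) (fun i _ => t - i)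
        · intro j hj
          simp only [Finset.mem_Icc] at hj
          simp only [Finset.mem_range]
          omega
        · intro i hi
          simp only [Finset.mem_range] at hi
          simp only [Finset.mem_Icc]
          omega
        · intro j hj
          simp only [Finset.mem_Icc] at hj
          omega
        · intro i hi
          simp only [Finset.mem_range] at hi
          omega
        · intro j hj; rfl
      rw [heq]
      have h1 : (1 : ℝ) - β₁ > 0 := by linarith
      rw [geom_sum_eq (by linarith : β₁ ≠ 1)]
      rw [show (β₁ ^ t - 1) / (β₁ - 1) = (1 - β₁ ^ t) / (1 - β₁) by
        rw [← neg_div_neg_eq]; ring_nf]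
      have := pow_nonneg hβ₁0 t
      gcongr
      linarith
    calc (∑ j ∈ Finset.Icc 1 t, β₁ ^ (t - j)) *
          (∑ j ∈ Finset.Icc 1 t, β₁ ^ (t - j) * (g j) ^ 2)
        ≤ (1 / (1 - β₁)) * (∑ j ∈ Finset.Icc 1 t, β₁ ^ (t - j) * (g j) ^ 2) :=
          mul_le_mul_of_nonneg_right hgeom hnn2
end
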